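/- arXiv:1003.4903 — 2 statements merged into one kernel-verified Lean document; each statement's English description precedes it below -/
import Mathlib

section
/- Let d ≥ 1, γ0 > 1, c_v > 0, b̃ ≥ 0, and set ν = (γ0+1)/(γ0−1). For π ≥ 0, s ∈ ℝ, u ∈ ℝ^d and ξ ∈ ℝ^d, let μ = ((γ0−1)/2)·π·(1 + b̃·exp(−s/(γ0 c_v))·π^{ν−1}) and define the (d+2)×(d+2) real matrix A(ξ) in block form with first row (u·ξ, μ ξᵀ, 0), middle block (μ·exp(s/(γ0 c_v))·ξ, (u·ξ)I_d, 0) and last row (0, 0, u·ξ). Let S = Diag(1, exp(−s/(γ0 c_v)), …, exp(−s/(γ0 c_v)), 1). Then S·A(ξ) is symmetric and S is symmetric positive definite; in particular this holds even when π = 0 (i.e. when the pressure and density vanish). -/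
/-!
Left multiplication by a diagonal matrix scales the rows, so `S * A` is symmetric exactly when
`S i i * A i j = S j j * A j i` for all `i, j`. The only off-diagonal pairs with nonzero entries
couple the pressure row `0` with a velocity row `i`, where the weight `e^{-s/(γ0 c_v)}` cancels
the factor `e^{s/(γ0 c_v)}` of `A i 0`.
-/

theorem Matrix.isSymm_diagonal_mul_iff {n α : Type*} [Fintype n] [DecidableEq n]
    [NonUnitalNonAssocSemiring α] (w : n → α) (A : Matrix n n α) :
    (diagonal w * A).IsSymm ↔ ∀ i j, w i * A i j = w j * A j i := by
  simp only [IsSymm, ← Matrix.ext_iff, transpose_apply, diagonal_mul]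
  exact forall_comm

/-- Symmetrisation of the Van der Waals–Euler system in the variables `(π,u,s)`,
valid up to vacuum: with `μ = ((γ0-1)/2) π (1 + b̃ e^{-s/(γ0 c_v)} π^{ν-1})`, the
symbol matrix `A(ξ)` (first row `(u·ξ, μξᵀ, 0)`, middle block
`(μ e^{s/(γ0 c_v)} ξ, (u·ξ)I_d, 0)`, last row `(0,0,u·ξ)`) becomes symmetric
after left multiplication by the positive definite diagonal matrix
`S = Diag(1, e^{-s/(γ0 c_v)}, …, e^{-s/(γ0 c_v)}, 1)`; this holds for all `π ≥ 0`,
in particular for `π = 0`. -/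
theorem stmt1 (d : ℕ) (γ0 cv btilde : ℝ) (π s : ℝ)
    (u ξ : Fin d → ℝ) :
    let ν : ℝ := (γ0 + 1) / (γ0 - 1)
    let μ : ℝ := ((γ0 - 1) / 2) * π *
      (1 + btilde * Real.exp (-s / (γ0 * cv)) * π ^ (ν - 1))
    let ext : (Fin d → ℝ) → Fin (d + 2) → ℝ := fun v j =>
      if h : 1 ≤ j.val ∧ j.val ≤ d then v ⟨j.val - 1, by omega⟩ else 0
    let A : Matrix (Fin (d + 2)) (Fin (d + 2)) ℝ := Matrix.of fun i j =>
      if i.val = 0 then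
        (if j.val = 0 then ∑ k, u k * ξ k else μ * ext ξ j)
      else if i.val = d + 1 then
        (if j.val = d + 1 then ∑ k, u k * ξ k else 0)
      else
        (if j.val = 0 then μ * Real.exp (s / (γ0 * cv)) * ext ξ i
         else if j = i then ∑ k, u k * ξ k else 0)
    let S : Matrix (Fin (d + 2)) (Fin (d + 2)) ℝ :=
      Matrix.diagonal fun i =>
        if i.val = 0 then 1
        else if i.val = d + 1 then 1
        else Real.exp (-s / (γ0 * cv))
    (S * A).IsSymm ∧ S.IsSymm ∧ S.PosDef := by
  intro ν μ ext A S
  have ext_last : ∀ j : Fin (d + 2), j.val = d + 1 → ext ξ j = 0 := fun j hj => by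
    simp only [ext, dif_neg (show ¬(1 ≤ j.val ∧ j.val ≤ d) by omega)]
  have exp_inv : Real.exp (-s / (γ0 * cv)) * Real.exp (s / (γ0 * cv)) = 1 := by
    rw [← Real.exp_add, neg_div, neg_add_cancel, Real.exp_zero]
  have exp_cancel : ∀ x, Real.exp (-s / (γ0 * cv)) * (μ * Real.exp (s / (γ0 * cv)) * x) = μ * x :=
    fun x => by linear_combination μ * x * exp_inv
  refine ⟨(Matrix.isSymm_diagonal_mul_iff _ _).2 fun i j => ?_, Matrix.isSymm_diagonal _,
    Matrix.posDef_diagonal_iff.2 fun i => by split_ifs <;> positivity⟩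
  simp only [A, Matrix.of_apply]
  split_ifs <;> first
    | omega
    | simp only [ext_last _ ‹_›, mul_zero]
    | simp only [exp_cancel, one_mul]
end

section
/- Let a > 1, ν ≥ 2 a real number, C > 0, 0 < T ≤ ∞, and define f : (0,∞) → (−∞,0) by f(x) = (1/ν)·log(x^ν/(1 + x^ν)); then f is a strictly increasing bijection from (0,∞) onto (−∞,0). Suppose ζ : [0,T) → (0,∞) is differentiable and satisfies ζ'(t) ≤ C·(1+t)^{−a}·(ζ(t)² + ζ(t)^{ν+1}) for all t ∈ [0,T). Then for all t ∈ [0,T): f(ζ(t)) ≤ f(ζ(0)) + 2C/(a−1). In particular, if f(ζ(0)) + 2C/(a−1) < 0, then ζ(t) ≤ f^{−1}( f(ζ(0)) + 2C/(a−1) ) for all t ∈ [0,T), i.e. ζ is uniformly bounded; this smallness condition holds whenever ζ(0) is small enough, since f(x) → −∞ as x → 0⁺. -/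
/-!
The function `f x = ν⁻¹ log (x^ν / (1 + x^ν)) = log x - ν⁻¹ log (1 + x^ν)` has derivative
`1 / (x (1 + x^ν))`, so `(f ∘ ζ)' = ζ' / (ζ (1 + ζ^ν))`. Since `ζ² + ζ^(ν+1) ≤ 2 ζ (1 + ζ^ν)`, this is
at most `2C (1+t)^(-a)`, the derivative of `-(2C / (a-1)) (1+t)^(1-a)`; comparing the two functions
on `[0, t]` bounds the increase of `f ∘ ζ` by `2C / (a-1)`.
-/

open Real Filter Set

noncomputable def logPowRatio (ν x : ℝ) : ℝ := 1 / ν * Real.log (x ^ ν / (1 + x ^ ν))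

section logPowRatio

variable {ν x : ℝ}

lemma logPowRatio_eq_log_sub (hν : ν ≠ 0) (hx : 0 < x) :
    logPowRatio ν x = Real.log x - 1 / ν * Real.log (1 + x ^ ν) := by
  have hxν : 0 < x ^ ν := rpow_pos_of_pos hx ν
  rw [logPowRatio, log_div hxν.ne' (by positivity), log_rpow hx]
  field_simp

lemma hasDerivAt_logPowRatio (hν : ν ≠ 0) (hx : 0 < x) :
    HasDerivAt (logPowRatio ν) (x * (1 + x ^ ν))⁻¹ x := by
  have hsplit : (fun y => Real.log y - 1 / ν * Real.log (1 + y ^ ν)) =ᶠ[nhds x] logPowRatio ν := by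
    filter_upwards [eventually_gt_nhds hx] with y hy
    exact (logPowRatio_eq_log_sub hν hy).symm
  have hderiv := (hasDerivAt_log hx.ne').sub
    ((((hasDerivAt_rpow_const (p := ν) (Or.inl hx.ne')).const_add 1).log
      (by positivity)).const_mul (1 / ν))
  refine (hderiv.congr_of_eventuallyEq hsplit.symm).congr_deriv ?_
  rw [rpow_sub_one hx.ne']
  field_simp
  ring

lemma strictMonoOn_logPowRatio (hν : ν ≠ 0) : StrictMonoOn (logPowRatio ν) (Ioi 0) := by
  refine strictMonoOn_of_hasDerivWithinAt_pos (f' := fun x => (x * (1 + x ^ ν))⁻¹) (convex_Ioi 0)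
    (fun x hx => (hasDerivAt_logPowRatio hν hx).continuousAt.continuousWithinAt)
    (fun x hx => ?_) (fun x hx => ?_) <;> rw [interior_Ioi, mem_Ioi] at hx
  · exact (hasDerivAt_logPowRatio hν hx).hasDerivWithinAt
  · positivity

lemma logPowRatio_neg (hν : 0 < ν) (hx : 0 < x) : logPowRatio ν x < 0 := by
  have hxν : 0 < x ^ ν := rpow_pos_of_pos hx ν
  have hlt : x ^ ν / (1 + x ^ ν) < 1 := by rw [div_lt_one (by positivity)]; linarith
  exact mul_neg_of_pos_of_neg (by positivity) (log_neg (by positivity) hlt)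

-- Solving `x^ν / (1 + x^ν) = exp (ν z)` for `x^ν`.
lemma logPowRatio_rpow_inv {z : ℝ} (hν : 0 < ν) (hz : z < 0) :
    logPowRatio ν ((exp (ν * z) / (1 - exp (ν * z))) ^ (1 / ν)) = z := by
  have he : exp (ν * z) < 1 := exp_lt_one_iff.mpr (mul_neg_of_pos_of_neg hν hz)
  have hu : 0 < exp (ν * z) / (1 - exp (ν * z)) := div_pos (exp_pos _) (by linarith)
  rw [logPowRatio, ← rpow_mul hu.le, one_div_mul_cancel hν.ne', rpow_one]
  have hne : 1 - exp (ν * z) ≠ 0 := by linarith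
  have harg : exp (ν * z) / (1 - exp (ν * z)) / (1 + exp (ν * z) / (1 - exp (ν * z)))
      = exp (ν * z) := by
    field_simp
    ring
  rw [harg, log_exp]
  field_simp

lemma bijOn_logPowRatio (hν : 0 < ν) : BijOn (logPowRatio ν) (Ioi 0) (Iio 0) := by
  refine ⟨fun x hx => logPowRatio_neg hν hx, (strictMonoOn_logPowRatio hν.ne').injOn,
    fun z hz => ⟨_, ?_, logPowRatio_rpow_inv hν hz⟩⟩
  have he : exp (ν * z) < 1 := exp_lt_one_iff.mpr (mul_neg_of_pos_of_neg hν (mem_Iio.mp hz))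
  exact rpow_pos_of_pos (div_pos (exp_pos _) (by linarith)) _

lemma tendsto_logPowRatio_nhdsGT_zero (hν : 0 < ν) :
    Tendsto (logPowRatio ν) (nhdsWithin 0 (Ioi 0)) atBot := by
  have hcont : Tendsto (fun y : ℝ => 1 / ν * Real.log (1 + y ^ ν)) (nhdsWithin 0 (Ioi 0))
      (nhds (1 / ν * Real.log (1 + (0 : ℝ) ^ ν))) :=
    (((continuousAt_rpow_const 0 ν (Or.inr hν.le)).tendsto.mono_left nhdsWithin_le_nhds
      |>.const_add 1).log (by simp [zero_rpow hν.ne'])).const_mul _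
  refine (tendsto_log_nhdsGT_zero.atBot_add hcont.neg).congr' ?_
  filter_upwards [self_mem_nhdsWithin] with y hy
  rw [logPowRatio_eq_log_sub hν.ne' hy, sub_eq_add_neg]

end logPowRatio

lemma rpow_two_add_rpow_add_one_le {x ν : ℝ} (hx : 0 < x) (hν : 1 ≤ ν) :
    x ^ (2 : ℝ) + x ^ (ν + 1) ≤ 2 * (x * (1 + x ^ ν)) := by
  have hle : x ≤ 2 + x ^ ν := by
    rcases le_or_gt x 1 with hx1 | hx1
    · linarith [rpow_pos_of_pos hx ν]
    · linarith [self_le_rpow_of_one_le hx1.le hν]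
  rw [rpow_two, rpow_add hx, rpow_one]
  nlinarith

theorem logPowRatio_le_of_deriv_le {ν a C t : ℝ} {ζ ζ' : ℝ → ℝ} (hν : 1 ≤ ν) (ha : 1 < a)
    (hC : 0 ≤ C) (ht : 0 ≤ t) (hpos : ∀ s ∈ Icc 0 t, 0 < ζ s)
    (hderiv : ∀ s ∈ Icc 0 t, HasDerivAt ζ (ζ' s) s)
    (hineq : ∀ s ∈ Icc 0 t, ζ' s ≤ C * (1 + s) ^ (-a) * (ζ s ^ (2 : ℝ) + ζ s ^ (ν + 1))) :
    logPowRatio ν (ζ t) ≤ logPowRatio ν (ζ 0) + 2 * C / (a - 1) := by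
  set K := 2 * C / (a - 1)
  have hK : K * (a - 1) = 2 * C := div_mul_cancel₀ _ (by linarith)
  have hcomp : ∀ s ∈ Icc 0 t, HasDerivAt (fun s => logPowRatio ν (ζ s))
      ((ζ s * (1 + ζ s ^ ν))⁻¹ * ζ' s) s := fun s hs =>
    (hasDerivAt_logPowRatio (by linarith) (hpos s hs)).comp s (hderiv s hs)
  have hbound : ∀ s ∈ Icc 0 t,
      HasDerivAt (fun s => logPowRatio ν (ζ 0) + K - K * (1 + s) ^ (1 - a))
        (2 * C * (1 + s) ^ (-a)) s := by
    intro s hs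
    have h1s : 0 < 1 + s := by linarith [hs.1]
    refine (((hasDerivAt_id s).const_add 1).rpow_const (p := 1 - a) (Or.inl h1s.ne')
      |>.const_mul K |>.const_sub _).congr_deriv ?_
    rw [show 1 - a - 1 = -a by ring, ← hK]
    simp only [id]
    ring
  have hslope : ∀ s ∈ Icc 0 t, (ζ s * (1 + ζ s ^ ν))⁻¹ * ζ' s ≤ 2 * C * (1 + s) ^ (-a) := by
    intro s hs
    have hζ := hpos s hs
    have h1s : 0 < 1 + s := by linarith [hs.1]
    have := rpow_pos_of_pos hζ ν
    rw [inv_mul_le_iff₀ (by positivity)]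
    calc ζ' s ≤ C * (1 + s) ^ (-a) * (ζ s ^ (2 : ℝ) + ζ s ^ (ν + 1)) := hineq s hs
      _ ≤ C * (1 + s) ^ (-a) * (2 * (ζ s * (1 + ζ s ^ ν))) := by
        gcongr
        exact rpow_two_add_rpow_add_one_le hζ hν
      _ = ζ s * (1 + ζ s ^ ν) * (2 * C * (1 + s) ^ (-a)) := by ring
  have hle := image_le_of_deriv_right_le_deriv_boundary
    (fun s hs => (hcomp s hs).continuousAt.continuousWithinAt)
    (fun s hs => (hcomp s (Ico_subset_Icc_self hs)).hasDerivWithinAt)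
    (by simp) (fun s hs => (hbound s hs).continuousAt.continuousWithinAt)
    (fun s hs => (hbound s (Ico_subset_Icc_self hs)).hasDerivWithinAt)
    (fun s hs => hslope s (Ico_subset_Icc_self hs)) (right_mem_Icc.mpr ht)
  have : 0 ≤ K * (1 + t) ^ (1 - a) := by
    have : 0 < 1 + t := by linarith
    have : 0 ≤ K := div_nonneg (by linarith) (by linarith)
    positivity
  linarith

theorem stmt19_general (a ν C : ℝ) (ha : 1 < a) (hν : 2 ≤ ν) (hC : 0 < C)
    (T : EReal)
    (f : ℝ → ℝ) (hf : f = fun x => (1 / ν) * Real.log (x ^ ν / (1 + x ^ ν)))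
    (ζ ζ' : ℝ → ℝ)
    (hpos : ∀ t : ℝ, 0 ≤ t → (t : EReal) < T → 0 < ζ t)
    (hderiv : ∀ t : ℝ, 0 ≤ t → (t : EReal) < T → HasDerivAt ζ (ζ' t) t)
    (hineq : ∀ t : ℝ, 0 ≤ t → (t : EReal) < T →
      ζ' t ≤ C * (1 + t) ^ (-a) * (ζ t ^ (2 : ℝ) + ζ t ^ (ν + 1))) :
    StrictMonoOn f (Set.Ioi 0) ∧
      Set.BijOn f (Set.Ioi 0) (Set.Iio 0) ∧
      (∀ t : ℝ, 0 ≤ t → (t : EReal) < T →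
        f (ζ t) ≤ f (ζ 0) + 2 * C / (a - 1)) ∧
      (∀ y : ℝ, 0 < y → f y = f (ζ 0) + 2 * C / (a - 1) →
        ∀ t : ℝ, 0 ≤ t → (t : EReal) < T → ζ t ≤ y) ∧
      Tendsto f (nhdsWithin 0 (Set.Ioi 0)) atBot := by
  obtain rfl : f = logPowRatio ν := hf
  have hν0 : 0 < ν := by linarith
  have hmono := strictMonoOn_logPowRatio hν0.ne'
  have hgronwall : ∀ t : ℝ, 0 ≤ t → (t : EReal) < T →
      logPowRatio ν (ζ t) ≤ logPowRatio ν (ζ 0) + 2 * C / (a - 1) := by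
    intro t ht htT
    have hsT : ∀ s ∈ Icc 0 t, (s : EReal) < T := fun s hs =>
      (EReal.coe_le_coe_iff.mpr hs.2).trans_lt htT
    exact logPowRatio_le_of_deriv_le (by linarith) ha hC.le ht
      (fun s hs => hpos s hs.1 (hsT s hs)) (fun s hs => hderiv s hs.1 (hsT s hs))
      (fun s hs => hineq s hs.1 (hsT s hs))
  refine ⟨hmono, bijOn_logPowRatio hν0, hgronwall, fun y hy hfy t ht htT => ?_,
    tendsto_logPowRatio_nhdsGT_zero hν0⟩
  rw [← hmono.le_iff_le (hpos t ht htT) hy, hfy]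
  exact hgronwall t ht htT

/-- Gronwall-type ODE lemma closing the global energy estimates: if `ζ > 0`
satisfies `ζ' ≤ C (1+t)^{-a} (ζ² + ζ^{ν+1})` on `[0,T)`, then with
`f(x) = (1/ν) log(x^ν/(1+x^ν))` (a strictly increasing bijection from `(0,∞)`
onto `(-∞,0)`, with `f(x) → -∞` as `x → 0⁺`) one has
`f(ζ(t)) ≤ f(ζ(0)) + 2C/(a-1)`, hence `ζ` is uniformly bounded whenever
`f(ζ(0)) + 2C/(a-1)` lies in the range of `f`. -/
theorem stmt19 (a ν C : ℝ) (ha : 1 < a) (hν : 2 ≤ ν) (hC : 0 < C)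
    (T : EReal) (hT : 0 < T)
    (f : ℝ → ℝ) (hf : f = fun x => (1 / ν) * Real.log (x ^ ν / (1 + x ^ ν)))
    (ζ ζ' : ℝ → ℝ)
    (hpos : ∀ t : ℝ, 0 ≤ t → (t : EReal) < T → 0 < ζ t)
    (hderiv : ∀ t : ℝ, 0 ≤ t → (t : EReal) < T → HasDerivAt ζ (ζ' t) t)
    (hineq : ∀ t : ℝ, 0 ≤ t → (t : EReal) < T →
      ζ' t ≤ C * (1 + t) ^ (-a) * (ζ t ^ (2 : ℝ) + ζ t ^ (ν + 1))) :
    StrictMonoOn f (Set.Ioi 0) ∧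
      Set.BijOn f (Set.Ioi 0) (Set.Iio 0) ∧
      (∀ t : ℝ, 0 ≤ t → (t : EReal) < T →
        f (ζ t) ≤ f (ζ 0) + 2 * C / (a - 1)) ∧
      (∀ y : ℝ, 0 < y → f y = f (ζ 0) + 2 * C / (a - 1) →
        ∀ t : ℝ, 0 ≤ t → (t : EReal) < T → ζ t ≤ y) ∧
      Tendsto f (nhdsWithin 0 (Set.Ioi 0)) atBot :=
  stmt19_general a ν C ha hν hC T f hf ζ ζ' hpos hderiv hineq
end
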